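/- arXiv:2404.10736 — 4 statements merged into one kernel-verified Lean document; each statement's English description precedes it below -/
import Mathlib

section
/- For any ordinal α, the principle H_α holds if and only if H_{|α|} holds, where |α| is the cardinality of α. -/
universe u

/-- `X ≼ Y`: there is an injection from `X` into `Y`. -/
def Inj (X Y : Type u) : Prop := ∃ f : X → Y, Function.Injective f

/-- `X ≺ Y`: `X ≼ Y` and not `Y ≼ X`. -/
def SInj (X Y : Type u) : Prop := Inj X Y ∧ ¬ Inj Y X

/-- Lévy's principle `H_α`: for every set `X`, trichotomy holds between `X` and `α`:
either `X ≺ α` or `α ≼ X`. -/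
def Hprin (α : Ordinal.{u}) : Prop :=
  ∀ X : Type u, SInj X α.ToType ∨ Inj α.ToType X

lemma inj_congr_right {A B X : Type u} (e : A ≃ B) : Inj X A ↔ Inj X B :=
  ⟨fun ⟨f, hf⟩ => ⟨e ∘ f, e.injective.comp hf⟩,
   fun ⟨f, hf⟩ => ⟨e.symm ∘ f, e.symm.injective.comp hf⟩⟩

lemma inj_congr_left {A B X : Type u} (e : A ≃ B) : Inj A X ↔ Inj B X :=
  ⟨fun ⟨f, hf⟩ => ⟨f ∘ e.symm, hf.comp e.symm.injective⟩,
   fun ⟨f, hf⟩ => ⟨f ∘ e, hf.comp e.injective⟩⟩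

theorem Hprin_iff_Hprin_card (α : Ordinal.{u}) :
    Hprin α ↔ Hprin α.card.ord := by
  have h : Cardinal.mk α.ToType = Cardinal.mk α.card.ord.ToType := by
    simp [Cardinal.mk_toType, Cardinal.card_ord]
  obtain ⟨e⟩ := Cardinal.eq.1 h
  unfold Hprin SInj
  constructor <;> intro H X <;> rcases H X with ⟨h1, h2⟩ | h1
  · exact Or.inl ⟨(inj_congr_right e).1 h1, fun hc => h2 ((inj_congr_left e).2 hc)⟩
  · exact Or.inr ((inj_congr_left e).1 h1)
  · exact Or.inl ⟨(inj_congr_right e).2 h1, fun hc => h2 ((inj_congr_left e).1 hc)⟩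
  · exact Or.inr ((inj_congr_left e).2 h1)
end

section
/- Let α be a singular limit ordinal. If DC_β holds for every β < α, then DC_α holds. -/
universe u

/-- `DC_α`: for every set `X` and function `F` from sequences from `X` of length `< α`
to nonempty subsets of `X`, there is `g : α → X` with `g i ∈ F (g ↾ i)` for all `i < α`.
A sequence of length `β < α` is represented by an `i : α.ToType` together with a
function on the initial segment of `α.ToType` below `i`. -/
def DCord (α : Ordinal.{u}) : Prop :=
  ∀ (X : Type u) (F : (Σ i : α.ToType, (Set.Iio i → X)) → Set X),
    (∀ t, (F t).Nonempty) →
    ∃ g : α.ToType → X, ∀ i : α.ToType, g i ∈ F ⟨i, fun j => g j.1⟩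

open Ordinal Set

namespace DCLevy

variable {α : Ordinal.{u}} {X : Type u}

theorem mem_Iio' {β : Type*} [Preorder β] {i j : β} (h : j < i) : j ∈ Set.Iio i := h

/-- Partial solution of "length" `i`. -/
def Sol (F : (Σ i : α.ToType, (Set.Iio i → X)) → Set X) (i : α.ToType)
    (w : Set.Iio i → X) : Prop :=
  ∀ j : Set.Iio i, w j ∈ F ⟨j.1, fun k => w ⟨k.1, mem_Iio' (lt_trans k.2 j.2)⟩⟩

theorem F_congr (F : (Σ i : α.ToType, (Set.Iio i → X)) → Set X) {i : α.ToType}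
    (w₁ w₂ : Set.Iio i → X) (hw : ∀ (j : α.ToType) (hj : j < i), w₁ ⟨j, hj⟩ = w₂ ⟨j, hj⟩) :
    F ⟨i, w₁⟩ = F ⟨i, w₂⟩ := by
  have : w₁ = w₂ := funext fun j => hw j.1 j.2
  rw [this]

/-- The initial segment below `i'` is order isomorphic to the set of ordinals below
the ordinal corresponding to `i'`. -/
noncomputable def segIio (i' : α.ToType) :
    Set.Iio i' ≃o Set.Iio (((ToType.mk (o := α))).symm i').1 where
  toFun j := ⟨(((ToType.mk (o := α))).symm j.1).1, by
    apply Set.mem_Iio.mpr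
    exact_mod_cast ((ToType.mk (o := α))).symm.lt_iff_lt.2 (Set.mem_Iio.mp j.2)⟩
  invFun γ := ⟨(ToType.mk (o := α)) ⟨γ.1, mem_Iio' (lt_trans (Set.mem_Iio.mp γ.2)
      (Set.mem_Iio.mp (((ToType.mk (o := α))).symm i').2))⟩, by
    apply Set.mem_Iio.mpr
    have h1 : (⟨γ.1, mem_Iio' (lt_trans (Set.mem_Iio.mp γ.2)
        (Set.mem_Iio.mp (((ToType.mk (o := α))).symm i').2))⟩ : Set.Iio α) <
        ((ToType.mk (o := α))).symm i' := Subtype.mk_lt_mk.2 (Set.mem_Iio.mp γ.2)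
    have h2 := ((ToType.mk (o := α))).lt_iff_lt.2 h1
    simpa using h2⟩
  left_inv j := by
    ext
    simp
  right_inv γ := by
    ext
    simp
  map_rel_iff' := by
    intro a b
    constructor
    · intro h
      have := ((ToType.mk (o := α))).symm.le_iff_le.1 (Subtype.coe_le_coe.1 h)
      exact Subtype.coe_le_coe.1 this
    · intro h
      exact Subtype.coe_le_coe.2 (((ToType.mk (o := α))).symm.le_iff_le.2 (Subtype.coe_le_coe.2 h))

/-- The initial segment below `i'` as the canonical type of the corresponding ordinal. -/
noncomputable def seg (i' : α.ToType) :
    Set.Iio i' ≃o (((ToType.mk (o := α))).symm i').1.ToType :=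
  (segIio i').trans (ToType.mk)


section

variable (F : (Σ i : α.ToType, (Set.Iio i → X)) → Set X)

/-- Extension relation on partial solutions. -/
def Ext (y y' : Σ i : α.ToType, {w : Set.Iio i → X // Sol F i w}) : Prop :=
  ∃ hle : y.1 ≤ y'.1, ∀ (j : α.ToType) (hj : j < y.1),
    y'.2.1 ⟨j, mem_Iio' (lt_of_lt_of_le hj hle)⟩ = y.2.1 ⟨j, mem_Iio' hj⟩

variable {F}

theorem Ext.refl (y) : Ext F y y := ⟨le_rfl, fun _ _ => rfl⟩

theorem Ext.agree {y y'} (h : Ext F y y') {j : α.ToType} (hj : j < y.1) (hj' : j ∈ Set.Iio y'.1) :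
    y'.2.1 ⟨j, hj'⟩ = y.2.1 ⟨j, mem_Iio' hj⟩ :=
  h.2 j hj

theorem Ext.trans {y₁ y₂ y₃} (h12 : Ext F y₁ y₂) (h23 : Ext F y₂ y₃) : Ext F y₁ y₃ := by
  obtain ⟨l12, e12⟩ := h12
  obtain ⟨l23, e23⟩ := h23
  refine ⟨l12.trans l23, fun j hj => ?_⟩
  rw [e23 j (lt_of_lt_of_le hj l12), e12 j hj]

theorem ext_of_le_of_agree {y y'}
    (hle : y.1 ≤ y'.1)
    (hagr : ∀ (j : α.ToType) (hj : j < y.1) (hj' : j < y'.1),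
      y'.2.1 ⟨j, mem_Iio' hj'⟩ = y.2.1 ⟨j, mem_Iio' hj⟩) : Ext F y y' :=
  ⟨hle, fun j hj => hagr j hj (lt_of_lt_of_le hj hle)⟩

/-- Any partial solution can be extended to any greater length, using `DC` below `α`. -/
theorem extend (hDC : ∀ β < α, DCord β) (hF : ∀ t, (F t).Nonempty)
    {i i' : α.ToType} (hii : i ≤ i') (u : Set.Iio i → X) (hu : Sol F i u) :
    ∃ v : Set.Iio i' → X, Sol F i' v ∧
      ∀ (j : α.ToType) (hj : j < i), v ⟨j, mem_Iio' (lt_of_lt_of_le hj hii)⟩ = u ⟨j, mem_Iio' hj⟩ := by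
  classical
  set β' : Ordinal.{u} := (((ToType.mk (o := α))).symm i').1 with hβ'
  have hβα : β' < α := (((ToType.mk (o := α))).symm i').2
  set d := seg i' with hd
  -- transported choice function
  set F' : (Σ k : β'.ToType, (Set.Iio k → X)) → Set X := fun t =>
    if hj : (d.symm t.1).1 < i then {u ⟨(d.symm t.1).1, mem_Iio' hj⟩}
    else F ⟨(d.symm t.1).1, fun m => t.2 ⟨d ⟨m.1, mem_Iio' (lt_trans (Set.mem_Iio.mp m.2)
      (Set.mem_Iio.mp (d.symm t.1).2))⟩, mem_Iio' (by
        have h1 : (⟨m.1, mem_Iio' (lt_trans (Set.mem_Iio.mp m.2)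
            (Set.mem_Iio.mp (d.symm t.1).2))⟩ : Set.Iio i') < d.symm t.1 :=
          Subtype.mk_lt_mk.2 (Set.mem_Iio.mp m.2)
        have h2 := d.lt_iff_lt.2 h1
        simpa using h2)⟩⟩ with hF'
  have hF'ne : ∀ t, (F' t).Nonempty := by
    intro t
    rw [hF']
    dsimp only
    split
    · exact Set.singleton_nonempty _
    · exact hF _
  obtain ⟨g', hg'⟩ := hDC β' hβα X F' hF'ne
  set v : Set.Iio i' → X := fun j => g' (d j) with hv
  -- the key fact, with the `dite` resolved
  have key : ∀ j : Set.Iio i',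
      (if hj : j.1 < i then v j = u ⟨j.1, mem_Iio' hj⟩
       else v j ∈ F ⟨j.1, fun m => v ⟨m.1, mem_Iio' (lt_trans (Set.mem_Iio.mp m.2)
         (Set.mem_Iio.mp j.2))⟩⟩) := by
    intro j
    have hmem := hg' (d j)
    have hdj : d.symm (d j) = j := d.symm_apply_apply j
    rw [hF'] at hmem
    simp only at hmem
    rw [hdj] at hmem
    split_ifs with hj
    · rw [dif_pos hj] at hmem
      exact hmem
    · rw [dif_neg hj] at hmem
      exact hmem
  refine ⟨v, ?_, ?_⟩
  · intro j
    have hk := key j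
    by_cases hj : j.1 < i
    · rw [dif_pos hj] at hk
      have hs := hu ⟨j.1, mem_Iio' hj⟩
      have heq := F_congr F
        (fun k : Set.Iio j.1 => v ⟨k.1, mem_Iio' (lt_trans (Set.mem_Iio.mp k.2)
          (Set.mem_Iio.mp j.2))⟩)
        (fun k : Set.Iio j.1 => u ⟨k.1, mem_Iio' (lt_trans (Set.mem_Iio.mp k.2) hj)⟩) ?_
      · rw [heq, hk]
        exact hs
      · intro m hm
        have hkm := key ⟨m, mem_Iio' (lt_trans hm (Set.mem_Iio.mp j.2))⟩
        rw [dif_pos (lt_trans hm hj)] at hkm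
        exact hkm
    · rw [dif_neg hj] at hk
      exact hk
  · intro j hj
    have hk := key ⟨j, mem_Iio' (lt_of_lt_of_le hj hii)⟩
    rw [dif_pos hj] at hk
    exact hk

/-- A short chain of partial solutions has an upper bound of any prescribed minimal length. -/
theorem chain_union (hDC : ∀ β < α, DCord β) (hF : ∀ t, (F t).Nonempty)
    {ι : Type u} [LinearOrder ι] (Hcard : Cardinal.mk ι < α.cof)
    (t : ι → Σ i : α.ToType, {w : Set.Iio i → X // Sol F i w})
    (hchain : ∀ c c', c ≤ c' → Ext F (t c) (t c'))
    (β₀ : Ordinal.{u}) (hβ₀ : β₀ < α) :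
    ∃ y, (ToType.mk (o := α)) ⟨β₀, hβ₀⟩ ≤ y.1 ∧ ∀ c, Ext F (t c) y := by
  classical
  set e := (ToType.mk (o := α)) with he
  set ords : ι → Ordinal.{u} := fun c => (e.symm (t c).1).1 with hords
  have hlt : ∀ c, ords c < α := fun c => (e.symm (t c).1).2
  set s : Ordinal.{u} := ⨆ c, ords c with hs
  have hsα : s < α := iSup_lt_of_lt_cof Hcard hlt
  set iₛ := e ⟨s, hsα⟩ with his
  have hlen : ∀ c, (t c).1 ≤ iₛ := by
    intro c
    have h1 : e.symm (t c).1 ≤ (⟨s, hsα⟩ : Set.Iio α) :=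
      Subtype.coe_le_coe.1 (Ordinal.le_iSup ords c)
    calc (t c).1 = e (e.symm (t c).1) := (e.apply_symm_apply _).symm
    _ ≤ iₛ := e.le_iff_le.2 h1
  have hex : ∀ j : Set.Iio iₛ, ∃ c, j.1 < (t c).1 := by
    intro j
    have hj : (e.symm j.1).1 < s := by
      have h2 : e.symm j.1 < e.symm (e ⟨s, hsα⟩) := e.symm.lt_iff_lt.2 (Set.mem_Iio.mp j.2)
      rw [e.symm_apply_apply] at h2
      exact h2
    obtain ⟨c, hc⟩ := Ordinal.lt_iSup_iff.1 hj
    refine ⟨c, ?_⟩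
    have h2 : e.symm j.1 < e.symm (t c).1 := Subtype.coe_lt_coe.1 hc
    have h3 := e.lt_iff_lt.2 h2
    simpa using h3
  set w : Set.Iio iₛ → X := fun j =>
    (t (Classical.choose (hex j))).2.1 ⟨j.1, mem_Iio' (Classical.choose_spec (hex j))⟩ with hw
  have agree2 : ∀ c c' (j : α.ToType) (hj : j < (t c).1) (hj' : j < (t c').1),
      (t c).2.1 ⟨j, mem_Iio' hj⟩ = (t c').2.1 ⟨j, mem_Iio' hj'⟩ := by
    intro c c' j hj hj'
    rcases le_total c c' with hcc | hcc
    · exact ((hchain c c' hcc).agree hj _).symm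
    · exact (hchain c' c hcc).agree hj' _
  have hwc : ∀ (j : Set.Iio iₛ) (c) (hc : j.1 < (t c).1), w j = (t c).2.1 ⟨j.1, mem_Iio' hc⟩ := by
    intro j c hc
    exact agree2 _ c j.1 (Classical.choose_spec (hex j)) hc
  have hsol : Sol F iₛ w := by
    intro j
    have hjc := Classical.choose_spec (hex j)
    have hs2 := (t (Classical.choose (hex j))).2.2 ⟨j.1, mem_Iio' hjc⟩
    have heq := F_congr F
      (fun k : Set.Iio j.1 => w ⟨k.1, mem_Iio' (lt_trans (Set.mem_Iio.mp k.2)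
        (Set.mem_Iio.mp j.2))⟩)
      (fun k : Set.Iio j.1 => (t (Classical.choose (hex j))).2.1
        ⟨k.1, mem_Iio' (lt_trans (Set.mem_Iio.mp k.2) hjc)⟩) ?_
    · rw [heq]
      exact hs2
    · intro m hm
      exact hwc ⟨m, mem_Iio' (lt_trans hm (Set.mem_Iio.mp j.2))⟩ _ (lt_trans hm hjc)
  have hmax : max s β₀ < α := max_lt hsα hβ₀
  set i' := e ⟨max s β₀, hmax⟩ with hi'
  have hsi' : iₛ ≤ i' := e.le_iff_le.2 (Subtype.coe_le_coe.1 (le_max_left s β₀))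
  obtain ⟨v, hv, hvw⟩ := extend hDC hF hsi' w hsol
  refine ⟨⟨i', v, hv⟩, ?_, ?_⟩
  · exact e.le_iff_le.2 (Subtype.coe_le_coe.1 (le_max_right s β₀))
  · intro c
    have h1 : Ext F (t c) ⟨iₛ, w, hsol⟩ :=
      ext_of_le_of_agree (hlen c) (fun j hj hj' => hwc ⟨j, mem_Iio' hj'⟩ c hj)
    have h2 : Ext F (⟨iₛ, w, hsol⟩ : Σ i : α.ToType, {w : Set.Iio i → X // Sol F i w})
        ⟨i', v, hv⟩ := ext_of_le_of_agree hsi' (fun j hj _ => hvw j hj)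
    exact h1.trans h2

end


end DCLevy

open DCLevy in
/-- Lévy: if `α` is a singular limit ordinal and `DC_β` holds for all `β < α`,
then `DC_α` holds. -/
theorem DC_singular_limit (α : Ordinal.{u}) (hlim : Order.IsSuccLimit α) (hsing : α.cof.ord < α)
    (h : ∀ β < α, DCord β) : DCord α := by
  intro X F hF
  classical
  set κ := α.cof.ord with hκ
  obtain ⟨f, hf⟩ := Ordinal.exists_fundamental_sequence α
  set e := (Ordinal.ToType.mk (o := α)) with he
  set eκ := (Ordinal.ToType.mk (o := κ)) with heκ
  set Y := Σ i : α.ToType, {w : Set.Iio i → X // Sol F i w} with hY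
  letI : OrderBot α.ToType := Ordinal.toTypeOrderBot hlim.pos.ne'
  let y₀ : Y := ⟨⊥, ⟨fun j => absurd (Set.mem_Iio.mp j.2) (not_lt_bot),
    fun j => absurd (Set.mem_Iio.mp j.2) (not_lt_bot)⟩⟩
  set tgt : κ.ToType → α.ToType := fun b =>
    e ⟨f (eκ.symm b).1 (Set.mem_Iio.mp (eκ.symm b).2),
      mem_Iio' (hf.lt (Set.mem_Iio.mp (eκ.symm b).2))⟩ with htgt
  set Good : (Σ b : κ.ToType, Set.Iio b → Y) → Prop :=
    fun t => ∀ c c' : Set.Iio t.1, c ≤ c' → Ext F (t.2 c) (t.2 c') with hGoodDef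
  set Fκ : (Σ b : κ.ToType, Set.Iio b → Y) → Set Y := fun t =>
    if Good t then {y | tgt t.1 ≤ y.1 ∧ ∀ c, Ext F (t.2 c) y} else Set.univ with hFκ
  have hcard : ∀ b : κ.ToType, Cardinal.mk (Set.Iio b) < α.cof := by
    intro b
    have h1 : Cardinal.mk (Set.Iio b) = (((Ordinal.ToType.mk (o := κ))).symm b).1.card := by
      rw [← Cardinal.mk_toType]
      exact Cardinal.mk_congr (DCLevy.seg b).toEquiv
    rw [h1]
    exact Cardinal.lt_ord.1 (Set.mem_Iio.mp (((Ordinal.ToType.mk (o := κ))).symm b).2)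
  have hFκne : ∀ t, (Fκ t).Nonempty := by
    intro t
    rw [hFκ]
    simp only
    by_cases hg : Good t
    · rw [if_pos hg]
      obtain ⟨y, hy1, hy2⟩ := chain_union h hF (hcard t.1) (fun c => t.2 c)
        (fun c c' hcc => hg c c' hcc)
        (f (eκ.symm t.1).1 (Set.mem_Iio.mp (eκ.symm t.1).2))
        (hf.lt (Set.mem_Iio.mp (eκ.symm t.1).2))
      exact ⟨y, hy1, hy2⟩
    · rw [if_neg hg]
      exact ⟨y₀, Set.mem_univ _⟩
  obtain ⟨G, hG⟩ := h κ hsing Y Fκ hFκne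
  have hGood : ∀ b : κ.ToType, Good ⟨b, fun c => G c.1⟩ := by
    intro b
    refine WellFoundedLT.induction (motive := fun b => Good ⟨b, fun c => G c.1⟩) b ?_
    intro b IH c c' hcc
    rcases eq_or_lt_of_le hcc with rfl | hlt'
    · exact Ext.refl _
    · have hGc' := hG c'.1
      have hgood' : Good ⟨c'.1, fun m => G m.1⟩ := IH c'.1 (Set.mem_Iio.mp c'.2)
      rw [hFκ] at hGc'
      simp only at hGc'
      rw [if_pos hgood'] at hGc'
      exact hGc'.2 ⟨c.1, mem_Iio' (Subtype.coe_lt_coe.2 hlt')⟩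
  have hall : ∀ b, tgt b ≤ (G b).1 ∧ ∀ c : Set.Iio b, Ext F (G c.1) (G b) := by
    intro b
    have hGb := hG b
    rw [hFκ] at hGb
    simp only at hGb
    rw [if_pos (hGood b)] at hGb
    exact hGb
  have Gagree : ∀ (b b' : κ.ToType) (j : α.ToType) (hj : j < (G b).1) (hj' : j < (G b').1),
      (G b).2.1 ⟨j, mem_Iio' hj⟩ = (G b').2.1 ⟨j, mem_Iio' hj'⟩ := by
    intro b b' j hj hj'
    rcases lt_trichotomy b b' with hbb | rfl | hbb
    · exact (((hall b').2 ⟨b, mem_Iio' hbb⟩).agree hj _).symm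
    · rfl
    · exact ((hall b).2 ⟨b', mem_Iio' hbb⟩).agree hj' _
  have keyl : ∀ (γ : Ordinal.{u}) (hγ : γ ∈ Set.Iio α) (i : α.ToType),
      (e.symm i).1 < γ → i < e ⟨γ, hγ⟩ := by
    intro γ hγ i hi
    have h5 : e.symm i < (⟨γ, hγ⟩ : Set.Iio α) := Subtype.coe_lt_coe.1 hi
    have h6 := e.lt_iff_lt.2 h5
    simpa using h6
  have hex : ∀ i : α.ToType, ∃ b, i < (G b).1 := by
    intro i
    have hγ : Order.succ (e.symm i).1 < α := hlim.succ_lt (Set.mem_Iio.mp (e.symm i).2)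
    have hblsub : Order.succ (e.symm i).1 < Ordinal.blsub.{u, u} κ f := by
      rw [hf.blsub_eq]
      exact hγ
    obtain ⟨p, hp, hple⟩ := Ordinal.lt_blsub_iff.1 hblsub
    refine ⟨eκ ⟨p, mem_Iio' hp⟩, ?_⟩
    have h1 : (e.symm i).1 < f p hp := Order.succ_le_iff.1 hple
    have h4 : (e.symm i).1 < f (eκ.symm (eκ ⟨p, mem_Iio' hp⟩)).1
        (Set.mem_Iio.mp (eκ.symm (eκ ⟨p, mem_Iio' hp⟩)).2) := by
      have hsymm : eκ.symm (eκ ⟨p, mem_Iio' hp⟩) = ⟨p, mem_Iio' hp⟩ := eκ.symm_apply_apply _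
      rw [hsymm]
      exact h1
    exact lt_of_lt_of_le (keyl _ _ i h4) ((hall _).1)
  refine ⟨fun i => (G (Classical.choose (hex i))).2.1
    ⟨i, mem_Iio' (Classical.choose_spec (hex i))⟩, ?_⟩
  intro i
  have hib := Classical.choose_spec (hex i)
  have hs := (G (Classical.choose (hex i))).2.2 ⟨i, mem_Iio' hib⟩
  have heq := F_congr F
    (fun j : Set.Iio i => (G (Classical.choose (hex j.1))).2.1
      ⟨j.1, mem_Iio' (Classical.choose_spec (hex j.1))⟩)
    (fun j : Set.Iio i => (G (Classical.choose (hex i))).2.1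
      ⟨j.1, mem_Iio' (lt_trans (Set.mem_Iio.mp j.2) hib)⟩) ?_
  · exact heq.symm ▸ hs
  · intro m hm
    exact Gagree (Classical.choose (hex m)) (Classical.choose (hex i)) m
      (Classical.choose_spec (hex m)) (lt_trans hm hib)
end

section
/- Let κ be a regular cardinal. The following are equivalent: (1) for every set X with X ⊀ κ there is a filter G on Coll(κ,X) meeting every L^X_i for i < κ; (2) for every set X with X ⊀ κ, each L^X_i is dense in Coll(κ,X) and there is a filter meeting all of them; (3) H_κ, i.e., for every set X, either X ≺ κ or κ ≼ X. -/
universe u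

/-- A condition in `Coll(κ,X)`: an injective function from a proper initial segment of
(the canonical well-order of type) `κ` into `X`.  Proper initial segments of `κ.ord.ToType`
correspond exactly to the ordinals `β < κ`. -/
structure Coll (κ : Cardinal.{u}) (X : Type u) : Type u where
  dom : κ.ord.ToType
  f : Set.Iio dom → X
  inj : Function.Injective f

/-- The extension order of `Coll(κ,X)`: `p ≤ q` iff `p` extends `q`. -/
def Coll.le {κ : Cardinal.{u}} {X : Type u} (p q : Coll κ X) : Prop :=
  ∃ h : q.dom ≤ p.dom, ∀ (i : κ.ord.ToType) (hi : i < q.dom),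
    p.f ⟨i, lt_of_lt_of_le hi h⟩ = q.f ⟨i, hi⟩

/-- The (open dense) set `L^X_i` of conditions of length at least `i`. -/
def CollL {κ : Cardinal.{u}} {X : Type u} (i : κ.ord.ToType) : Set (Coll κ X) :=
  {p | i ≤ p.dom}

/-- A filter on a set equipped with a relation `le`: nonempty, upward closed and
downward directed. -/
def IsFilt {P : Type u} (le : P → P → Prop) (G : Set P) : Prop :=
  G.Nonempty ∧ (∀ p ∈ G, ∀ q, le p q → q ∈ G) ∧
    ∀ p ∈ G, ∀ q ∈ G, ∃ r ∈ G, le r p ∧ le r q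

/-- `D` is dense: every condition has an extension in `D`. -/
def IsDense {P : Type u} (le : P → P → Prop) (D : Set P) : Prop :=
  ∀ p, ∃ q ∈ D, le q p

/-- `D` is open: closed under extensions. -/
def IsOpen' {P : Type u} (le : P → P → Prop) (D : Set P) : Prop :=
  ∀ p ∈ D, ∀ q, le q p → q ∈ D


open Cardinal

namespace CollAux

variable {κ : Cardinal.{u}} {X : Type u}

lemma le_refl' (p : Coll κ X) : Coll.le p p := ⟨le_refl _, fun _ _ => rfl⟩

/-- restriction of a globally defined injection -/
def restrict (e : κ.ord.ToType → X) (he : Function.Injective e) (d : κ.ord.ToType) :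
    Coll κ X := ⟨d, fun j => e j.1, fun _ _ h => Subtype.ext (he h)⟩

lemma filt_of_inj (hκ : ℵ₀ ≤ κ) (e : κ.ord.ToType → X) (he : Function.Injective e) :
    ∃ G : Set (Coll κ X), IsFilt Coll.le G ∧
      ∀ i : κ.ord.ToType, (G ∩ CollL i).Nonempty := by
  refine ⟨{p | ∀ (j : κ.ord.ToType) (hj : j < p.dom), p.f ⟨j, hj⟩ = e j}, ⟨?_, ?_, ?_⟩, ?_⟩
  · obtain ⟨d⟩ : Nonempty κ.ord.ToType := Cardinal.mk_ne_zero_iff.1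
      (by rw [mk_ord_toType]; exact ((aleph0_pos.trans_le hκ).ne'))
    exact ⟨restrict e he d, fun _ _ => rfl⟩
  · rintro p hp q ⟨h, hle⟩ j hj
    rw [← hle j hj]; exact hp j _
  · intro p hp q hq
    rcases le_total p.dom q.dom with h | h
    · exact ⟨q, hq, ⟨h, fun j hj => by rw [hq j _, hp j hj]⟩, le_refl' q⟩
    · exact ⟨p, hp, le_refl' p, ⟨h, fun j hj => by rw [hp j _, hq j hj]⟩⟩
  · intro i
    exact ⟨restrict e he i, fun _ _ => rfl, le_refl i⟩

lemma inj_of_filt (hκ : ℵ₀ ≤ κ) {G : Set (Coll κ X)} (hG : IsFilt Coll.le G)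
    (hmeet : ∀ i : κ.ord.ToType, (G ∩ CollL i).Nonempty) :
    ∃ F : κ.ord.ToType → X, Function.Injective F := by
  have : NoMaxOrder κ.ord.ToType := Cardinal.noMaxOrder hκ
  have key : ∀ i : κ.ord.ToType, ∃ x : X, ∀ p ∈ G, ∀ h : i < p.dom, p.f ⟨i, h⟩ = x := by
    intro i
    obtain ⟨j, hij⟩ := exists_gt i
    obtain ⟨p, hpG, hpj⟩ := hmeet j
    refine ⟨p.f ⟨i, lt_of_lt_of_le hij hpj⟩, ?_⟩
    intro q hqG hq
    obtain ⟨r, hrG, ⟨hrp, hrpf⟩, ⟨hrq, hrqf⟩⟩ := hG.2.2 p hpG q hqG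
    rw [← hrpf i (lt_of_lt_of_le hij hpj), ← hrqf i hq]
  choose F hF using key
  refine ⟨F, fun a b hab => ?_⟩
  obtain ⟨j, hj⟩ := exists_gt (max a b)
  obtain ⟨p, hpG, hpj⟩ := hmeet j
  have ha : a < p.dom := lt_of_le_of_lt (le_max_left a b) (lt_of_lt_of_le hj hpj)
  have hb : b < p.dom := lt_of_le_of_lt (le_max_right a b) (lt_of_lt_of_le hj hpj)
  have heq : p.f ⟨a, ha⟩ = p.f ⟨b, hb⟩ := by
    rw [hF a p hpG ha, hF b p hpG hb, hab]
  exact congrArg Subtype.val (p.inj heq)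

lemma dense_of_inj (hκ : ℵ₀ ≤ κ) (e : κ.ord.ToType → X) (he : Function.Injective e)
    (i : κ.ord.ToType) : IsDense Coll.le (CollL (κ := κ) (X := X) i) := by
  classical
  intro p
  rcases le_total i p.dom with h | h
  · exact ⟨p, h, le_refl' p⟩
  · have hX : κ ≤ #X := by
      rw [← mk_ord_toType κ]; exact mk_le_of_injective he
    have hrange : #(Set.range p.f) < κ :=
      lt_of_le_of_lt mk_range_le (Cardinal.mk_Iio_ord_toType p.dom)
    have hcompl : κ ≤ #(↥(Set.range p.f)ᶜ) := by
      by_contra hc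
      push_neg at hc
      have hsum := Cardinal.mk_sum_compl (Set.range p.f)
      have hlt : #X < κ := by
        rw [← hsum]; exact Cardinal.add_lt_of_lt hκ hrange hc
      exact absurd hX (not_le_of_gt hlt)
    have hIio : #(Set.Iio i) < κ := Cardinal.mk_Iio_ord_toType i
    obtain ⟨g⟩ := le_of_lt (lt_of_lt_of_le hIio hcompl)
    refine ⟨⟨i, fun j => if hj : j.1 < p.dom then p.f ⟨j.1, hj⟩ else (g j).1, ?_⟩,
      le_refl i, h, fun j hj => dif_pos hj⟩
    intro a b hab
    dsimp only at hab
    by_cases ha : a.1 < p.dom <;> by_cases hb : b.1 < p.dom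
    · rw [dif_pos ha, dif_pos hb] at hab
      have h2 := congrArg Subtype.val (p.inj hab)
      exact Subtype.ext h2
    · rw [dif_pos ha, dif_neg hb] at hab
      exact absurd ⟨⟨a.1, ha⟩, hab⟩ (g b).2
    · rw [dif_neg ha, dif_pos hb] at hab
      exact absurd ⟨⟨b.1, hb⟩, hab.symm⟩ (g a).2
    · rw [dif_neg ha, dif_neg hb] at hab
      exact g.injective (Subtype.ext hab)

end CollAux


open Cardinal CollAux in
/-- For a regular cardinal `κ`, the forcing axiom `FA(Coll_κ, 𝔏^κ)`, its variant asserting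
in addition density of the `L^X_i`, and Lévy's principle `H_κ` are all equivalent. -/
theorem FA_Coll_iff_H (κ : Cardinal.{u}) (hκ : κ.IsRegular) :
    ((∀ X : Type u, ¬ SInj X κ.ord.ToType →
        ∃ G : Set (Coll κ X), IsFilt Coll.le G ∧
          ∀ i : κ.ord.ToType, (G ∩ CollL i).Nonempty) ↔
      (∀ X : Type u, ¬ SInj X κ.ord.ToType →
        (∀ i : κ.ord.ToType, IsDense Coll.le (CollL (κ := κ) (X := X) i)) ∧
        ∃ G : Set (Coll κ X), IsFilt Coll.le G ∧
          ∀ i : κ.ord.ToType, (G ∩ CollL i).Nonempty)) ∧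
    ((∀ X : Type u, ¬ SInj X κ.ord.ToType →
        ∃ G : Set (Coll κ X), IsFilt Coll.le G ∧
          ∀ i : κ.ord.ToType, (G ∩ CollL i).Nonempty) ↔
      (∀ X : Type u, SInj X κ.ord.ToType ∨ Inj κ.ord.ToType X)) := by
  have hℵ : ℵ₀ ≤ κ := hκ.aleph0_le
  constructor
  · constructor
    · intro h1 X hX
      obtain ⟨G, hG, hmeet⟩ := h1 X hX
      obtain ⟨e, he⟩ := inj_of_filt hℵ hG hmeet
      exact ⟨fun i => dense_of_inj hℵ e he i, G, hG, hmeet⟩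
    · intro h2 X hX
      exact (h2 X hX).2
  · constructor
    · intro h1 X
      by_cases hX : SInj X κ.ord.ToType
      · exact Or.inl hX
      · obtain ⟨G, hG, hmeet⟩ := h1 X hX
        exact Or.inr (inj_of_filt hℵ hG hmeet)
    · intro h3 X hX
      rcases h3 X with h | ⟨e, he⟩
      · exact absurd h hX
      · exact filt_of_inj hℵ e he
end

section
/- FA_ω(Λ) implies that every infinite set is Dedekind-infinite. That is, if for every tree T ∈ Λ and every countable family of dense subsets of T there is a filter meeting all of them, then every infinite set admits an injection from ω. -/
universe u

/-- A strict lattice: a strict partial order in which every pair of elements has a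
supremum and an infimum. -/
structure StrictLat (L : Type u) where
  lt : L → L → Prop
  irrefl : ∀ x, ¬ lt x x
  trans : ∀ {x y z}, lt x y → lt y z → lt x z
  inf : L → L → L
  sup : L → L → L
  inf_le_left : ∀ p q, lt (inf p q) p ∨ inf p q = p
  inf_le_right : ∀ p q, lt (inf p q) q ∨ inf p q = q
  le_inf : ∀ p q r, (lt r p ∨ r = p) → (lt r q ∨ r = q) → (lt r (inf p q) ∨ r = inf p q)
  le_sup_left : ∀ p q, lt p (sup p q) ∨ p = sup p q
  le_sup_right : ∀ p q, lt q (sup p q) ∨ q = sup p q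
  sup_le : ∀ p q r, (lt p r ∨ p = r) → (lt q r ∨ q = r) → (lt (sup p q) r ∨ sup p q = r)

/-- The finite predecessor property: every element has only finitely many elements
strictly above it. -/
def StrictLat.FPP {L : Type u} (S : StrictLat L) : Prop := ∀ x, {y | S.lt x y}.Finite

/-- No minimal elements: below every element there is another. -/
def StrictLat.NoMin {L : Type u} (S : StrictLat L) : Prop := ∀ x, ∃ y, S.lt y x

/-- The tree of finite strictly decreasing sequences from the strict lattice `S`,
an element of the class `Λ`. -/
def DecSeq {L : Type u} (S : StrictLat L) : Type u :=
  {l : List L // l.Chain' fun a b => S.lt b a}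

/-- The forcing order on the tree: `s ≤ t` iff `s` end-extends `t`. -/
def DecSeq.le {L : Type u} {S : StrictLat L} (s t : DecSeq S) : Prop :=
  t.1 <+: s.1

/-- `FA_ω(Λ)` implies that every infinite set is Dedekind-infinite. -/
theorem FA_omega_Lambda_implies_dedekind
    (hFA : ∀ (L : Type u) (S : StrictLat L), S.FPP → S.NoMin →
      ∀ D : ℕ → Set (DecSeq S), (∀ n, IsDense DecSeq.le (D n)) →
        ∃ G : Set (DecSeq S), IsFilt DecSeq.le G ∧ ∀ n, (G ∩ D n).Nonempty) :
    ∀ X : Type u, Infinite X → ∃ f : ℕ → X, Function.Injective f := by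
  intro X hX
  classical
  have toSub : ∀ {a b : Finset X}, (b ⊂ a ∨ a = b) → b ⊆ a := by
    rintro a b (h | rfl)
    · exact h.subset
    · exact subset_rfl
  set S : StrictLat (Finset X) :=
    { lt := fun a b => b ⊂ a
      irrefl := fun x h => ssubset_irrefl x h
      trans := fun h1 h2 => h2.trans h1
      inf := fun a b => a ∪ b
      sup := fun a b => a ∩ b
      inf_le_left := fun p q =>
        (Finset.subset_union_left).ssubset_or_eq.imp id Eq.symm
      inf_le_right := fun p q =>
        (Finset.subset_union_right).ssubset_or_eq.imp id Eq.symm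
      le_inf := fun p q r hp hq =>
        (Finset.union_subset (toSub hp) (toSub hq)).ssubset_or_eq.imp id Eq.symm
      le_sup_left := fun p q =>
        (Finset.inter_subset_left).ssubset_or_eq.imp id Eq.symm
      le_sup_right := fun p q =>
        (Finset.inter_subset_right).ssubset_or_eq.imp id Eq.symm
      sup_le := fun p q r hp hq =>
        (Finset.subset_inter (toSub hp) (toSub hq)).ssubset_or_eq.imp id Eq.symm }
    with hS
  have hFPP : S.FPP := by
    intro x
    refine x.powerset.finite_toSet.subset ?_
    intro y hy
    have : y ⊂ x := hy
    exact Finset.mem_coe.2 (Finset.mem_powerset.2 this.subset)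
  have hNoMin : S.NoMin := by
    intro x
    obtain ⟨a, ha⟩ := Infinite.exists_notMem_finset x
    exact ⟨insert a x, Finset.ssubset_insert ha⟩
  set D : ℕ → Set (DecSeq S) := fun n => {l | n < l.1.length} with hD
  -- every condition can be extended by one step
  have ext1 : ∀ p : DecSeq S, ∃ q : DecSeq S, p.1 <+: q.1 ∧ p.1.length < q.1.length := by
    intro p
    set b : Finset X := p.1.getLast?.getD ∅ with hb
    obtain ⟨a, ha⟩ := Infinite.exists_notMem_finset b
    have hchain : (p.1 ++ [insert a b]).Chain' fun u v => S.lt v u := by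
      rw [List.Chain', List.isChain_append]
      refine ⟨p.2, List.isChain_singleton _, ?_⟩
      intro x hx y hy
      simp only [List.head?_cons, Option.mem_def, Option.some.injEq] at hy
      subst hy
      have hbx : b = x := by rw [hb, hx]; rfl
      subst hbx
      exact Finset.ssubset_insert ha
    refine ⟨⟨p.1 ++ [insert a b], hchain⟩, ⟨[insert a b], rfl⟩, ?_⟩
    simp
  have extn : ∀ (n : ℕ) (p : DecSeq S), ∃ q : DecSeq S, p.1 <+: q.1 ∧ n < q.1.length := by
    intro n
    induction n with
    | zero =>
      intro p
      obtain ⟨q, hpq, hlen⟩ := ext1 p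
      exact ⟨q, hpq, Nat.lt_of_le_of_lt (Nat.zero_le _) hlen⟩
    | succ n ih =>
      intro p
      obtain ⟨q, hpq, hlen⟩ := ih p
      obtain ⟨r, hqr, hlen'⟩ := ext1 q
      exact ⟨r, hpq.trans hqr, Nat.lt_of_le_of_lt hlen hlen'⟩
  have hdense : ∀ n, IsDense DecSeq.le (D n) := by
    intro n p
    obtain ⟨q, hpq, hlen⟩ := extn n p
    exact ⟨q, hlen, hpq⟩
  obtain ⟨G, hGfilt, hGmeet⟩ := hFA (Finset X) S hFPP hNoMin D hdense
  -- any two conditions in G are comparable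
  have compat : ∀ a ∈ G, ∀ b ∈ G, a.1 <+: b.1 ∨ b.1 <+: a.1 := by
    intro a ha b hb
    obtain ⟨r, _, hra, hrb⟩ := hGfilt.2.2 a ha b hb
    exact List.prefix_or_prefix_of_prefix hra hrb
  have agree : ∀ a ∈ G, ∀ b ∈ G, ∀ (k : ℕ) (hka : k < a.1.length) (hkb : k < b.1.length),
      a.1[k] = b.1[k] := by
    intro a ha b hb k hka hkb
    rcases compat a ha b hb with h | h
    · exact h.getElem hka
    · exact (h.getElem hkb).symm
  choose g hg using hGmeet
  have hgG : ∀ n, g n ∈ G := fun n => (hg n).1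
  have hglen : ∀ n, n < (g n).1.length := fun n => (hg n).2
  set s : ℕ → Finset X := fun n => (g n).1[n]'(hglen n) with hs
  have sstep : ∀ n, s n ⊂ s (n + 1) := by
    intro n
    have h1 : n < (g (n + 1)).1.length := Nat.lt_of_succ_lt (hglen (n + 1))
    have hc := (g (n + 1)).2
    rw [List.Chain', List.isChain_iff_getElem] at hc
    have h2 : n < (g (n + 1)).1.length - 1 := Nat.lt_sub_of_add_lt (hglen (n + 1))
    have hlt := hc n (hglen (n + 1))
    skip
    have heq : s n = (g (n + 1)).1[n]'h1 :=
      agree (g n) (hgG n) (g (n + 1)) (hgG (n + 1)) n (hglen n) h1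
    have : (g (n + 1)).1[n]'h1 ⊂ (g (n + 1)).1[n + 1]'(hglen (n + 1)) := hlt
    rw [heq]
    exact this
  have hmono : StrictMono s := strictMono_nat_of_lt_succ fun n => sstep n
  have hpick : ∀ n, ∃ x ∈ s (n + 1), x ∉ s n := fun n => Finset.exists_of_ssubset (sstep n)
  choose f hf1 hf2 using hpick
  refine ⟨f, ?_⟩
  have key : ∀ m n, m < n → f m ≠ f n := by
    intro m n hmn heq
    have h1 : f m ∈ s n := hmono.monotone (Nat.succ_le_of_lt hmn) (hf1 m)
    rw [heq] at h1
    exact hf2 n h1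
  intro m n heq
  by_contra hne
  rcases Nat.lt_or_ge m n with h | h
  · exact key m n h heq
  · exact key n m (Nat.lt_of_le_of_ne h (Ne.symm hne)) heq.symm
end
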